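/- Let A be a 2 × 2 matrix with entries in [0,1] such that each column of A has meet zero (min(A₀ⱼ, A₁ⱼ) = 0 for j = 0, 1), and let v = (x, y) ∈ [0,1]² with min(x, y) = 0. Then the vector A(v) defined by (A v)ᵢ = minⱼ min(A_{ij} + vⱼ, 1) again satisfies min((Av)₀, (Av)₁) = 0. Moreover A applied to (1,1) yields (1,1), and the all-ones matrix applied to any v ∈ S(2) yields (1,1). Hence the action of MV₂(I) preserves S(2). -/

import Mathlib

/-!
A vector of `S(2)` has a zero coordinate `vⱼ` and the `j`-th column of `A` has a zero entry
`A_{ij}`, so `(A v)ᵢ ≤ A_{ij} + vⱼ = 0`. The other two claims hold because every truncated sum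
`A_{ij} ⊕ vⱼ` equals `1` as soon as `A_{ij} = 1` or `vⱼ = 1`.
-/

/-- The action of a `2 × 2` matrix on a vector in the semiring `([0,1], ∧, ⊕)`:
`(A v)ᵢ = ∧ⱼ min(A_{ij} + vⱼ, 1)`. -/
def mvAct (A : Matrix (Fin 2) (Fin 2) ℝ) (v : Fin 2 → ℝ) : Fin 2 → ℝ :=
  fun i => min (min (A i 0 + v 0) 1) (min (A i 1 + v 1) 1)

section MinFinTwo

variable {α : Type*} [LinearOrder α] {w : Fin 2 → α} {c : α}

theorem Fin.exists_eq_of_min_eq (h : min (w 0) (w 1) = c) : ∃ i, w i = c :=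
  (min_choice (w 0) (w 1)).elim (fun h₀ => ⟨0, h₀ ▸ h⟩) (fun h₁ => ⟨1, h₁ ▸ h⟩)

theorem Fin.min_eq_of_exists_le (hw : ∀ i, c ≤ w i) (h : ∃ i, w i ≤ c) :
    min (w 0) (w 1) = c :=
  le_antisymm (min_le_iff.mpr (Fin.exists_fin_two.mp h)) (le_min (hw 0) (hw 1))

end MinFinTwo

section MvAct

variable {A : Matrix (Fin 2) (Fin 2) ℝ} {v : Fin 2 → ℝ}

theorem mvAct_le (i j : Fin 2) :
    mvAct A v i ≤ A i j + v j := by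
  fin_cases j
  · exact (min_le_left _ _).trans (min_le_left _ _)
  · exact (min_le_right _ _).trans (min_le_left _ _)

theorem mvAct_nonneg {i : Fin 2} (hA : ∀ j, 0 ≤ A i j) (hv : ∀ j, 0 ≤ v j) :
    0 ≤ mvAct A v i :=
  le_min (le_min (add_nonneg (hA 0) (hv 0)) zero_le_one)
    (le_min (add_nonneg (hA 1) (hv 1)) zero_le_one)

theorem mvAct_eq_one {i : Fin 2} (h : ∀ j, 1 ≤ A i j + v j) : mvAct A v i = 1 := by
  simp only [mvAct, min_eq_right (h 0), min_eq_right (h 1), min_self]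

theorem mvAct_eq_ones (h : ∀ i j, 1 ≤ A i j + v j) : mvAct A v = ![1, 1] := by
  funext i
  rw [mvAct_eq_one (h i)]
  fin_cases i <;> rfl

end MvAct

/-- The action of `MV₂(I)` preserves `S(2)`: a matrix with entries in `[0,1]`
whose columns have meet zero sends a vector with entries in `[0,1]` and meet
zero to another such vector; moreover every such matrix sends `(1,1)` to
`(1,1)`, and the all-ones matrix sends every element of `S(2)` to `(1,1)`. -/
theorem mvAct_preserves_S2 (A : Matrix (Fin 2) (Fin 2) ℝ)
    (hA : ∀ i j, A i j ∈ Set.Icc (0 : ℝ) 1)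
    (hAcol : ∀ j, min (A 0 j) (A 1 j) = 0) :
    (∀ v : Fin 2 → ℝ, (∀ j, v j ∈ Set.Icc (0 : ℝ) 1) → min (v 0) (v 1) = 0 →
      min (mvAct A v 0) (mvAct A v 1) = 0) ∧
    mvAct A ![1, 1] = ![1, 1] ∧
    (∀ v : Fin 2 → ℝ, (∀ j, v j ∈ Set.Icc (0 : ℝ) 1) →
      (min (v 0) (v 1) = 0 ∨ v = ![1, 1]) →
      mvAct (Matrix.of fun _ _ => (1 : ℝ)) v = ![1, 1]) := by
  refine ⟨fun v hv hmin => ?_, ?_, fun v hv _ => ?_⟩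
  · obtain ⟨j, hvj⟩ := Fin.exists_eq_of_min_eq hmin
    obtain ⟨i, hAij⟩ := Fin.exists_eq_of_min_eq (w := fun i => A i j) (hAcol j)
    refine Fin.min_eq_of_exists_le (fun k => mvAct_nonneg (hA k · |>.1) (hv · |>.1)) ⟨i, ?_⟩
    exact (mvAct_le i j).trans_eq (by rw [hAij, hvj, add_zero])
  · exact mvAct_eq_ones fun i j => by fin_cases j <;> simp [(hA i _).1]
  · exact mvAct_eq_ones fun _ j => le_add_of_nonneg_right (hv j).1
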